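/- arXiv:1903.05060 — 3 statements merged into one kernel-verified Lean document; each statement's English description precedes it below -/
import Mathlib

section
/- Let m and p be positive integers, l = 4mp + 2p + 1 and t = 4mp + 1, so that p' = (2m+1)p. Partition {1,…,p'} into the 2m+1 intervals I_a = {(a−1)p+1, …, ap}, 1 ≤ a ≤ 2m+1. Then for k ∈ I_a: if a is odd, i_k = (2m+1)(k−1) + m + 1 − ((a−1)/2)·(2(2m+1)p + 1), and if a is even, i_k = (2m+1)(2p−k) + m + 2 + ((a−2)/2)·(2(2m+1)p + 1). -/
/-- `σ_j = (-1)^{⌊(2j-1)t/l⌋}`. -/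
def sigmaF (l t j : ℕ) : ℤ := (-1) ^ ((2 * j - 1) * t / l)

/-- `r(j)`: the unique integer with `r(j) ≡ (2j-1)t (mod 2l)` and `-l < r(j) < l`. -/
def rF (l t j : ℕ) : ℤ :=
  if (((2 * j - 1) * t : ℕ) : ℤ) % (2 * l) < l then (((2 * j - 1) * t : ℕ) : ℤ) % (2 * l)
  else (((2 * j - 1) * t : ℕ) : ℤ) % (2 * l) - 2 * l

/-- `r'(j) = (|r(j)| + 1)/2`. -/
def rpF (l t j : ℕ) : ℤ := (|rF l t j| + 1) / 2

/-! The key identity is `(2m+1) t = 2m l + 1`, so `2m+1` inverts `t` modulo `2l`. Since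
`r'(j) = k` means `(2j-1) t ≡ ±(2k-1) (mod 2l)`, it follows that `2j-1 ≡ ±(2m+1)(2k-1)`.
For `k ∈ I_a` one has `(2m+1)(2k-1) = (a-1) l + d` with `0 < d < l`; as `0 < 2j-1 < l`, this
forces `2j-1 = d` when `a` is odd and `2j-1 = l - d` when `a` is even. -/

def Int.ModEqUpToSign (n a b : ℤ) : Prop := a ≡ b [ZMOD n] ∨ a ≡ -b [ZMOD n]

namespace Int.ModEqUpToSign

variable {n a b c : ℤ}

theorem of_modEq (h : a ≡ b [ZMOD n]) : ModEqUpToSign n a b := Or.inl h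

theorem of_modEq_neg (h : a ≡ -b [ZMOD n]) : ModEqUpToSign n a b := Or.inr h

theorem trans (h₁ : ModEqUpToSign n a b) (h₂ : ModEqUpToSign n b c) : ModEqUpToSign n a c := by
  rcases h₁ with h₁ | h₁ <;> rcases h₂ with h₂ | h₂
  · exact .inl (h₁.trans h₂)
  · exact .inr (h₁.trans h₂)
  · exact .inr (h₁.trans h₂.neg)
  · exact .inl (h₁.trans (by simpa using h₂.neg))

theorem mul_left (c : ℤ) (h : ModEqUpToSign n a b) : ModEqUpToSign n (c * a) (c * b) :=
  h.imp (·.mul_left c) fun h => by simpa using h.mul_left c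

theorem eq_of_pos_of_lt (h : ModEqUpToSign (2 * n) a b) (ha₀ : 0 < a) (ha : a < n)
    (hb₀ : 0 < b) (hb : b < n) : a = b := by
  rcases h with h | h
  · have := Int.eq_zero_of_abs_lt_dvd (Int.ModEq.dvd h) (by rw [abs_lt]; constructor <;> linarith)
    linarith
  · have := Int.eq_zero_of_dvd_of_nonneg_of_lt (by linarith) (by linarith) (Int.ModEq.dvd h.symm)
    linarith

end Int.ModEqUpToSign

open Int

theorem rF_modEq (l t j : ℕ) : rF l t j ≡ ((2 * j - 1) * t : ℕ) [ZMOD 2 * l] := by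
  unfold rF
  split_ifs
  · exact Int.mod_modEq _ _
  · exact ((Int.mod_modEq _ _).sub_right _).trans (by simp [Int.ModEq])

theorem modEqUpToSign_of_rpF_eq {l t j : ℕ} {k : ℤ} (ht : Odd t) (hj : 1 ≤ j)
    (h : rpF l t j = k) : ModEqUpToSign (2 * l) ((2 * j - 1) * t) (2 * k - 1) := by
  have hcast : (((2 * j - 1) * t : ℕ) : ℤ) = (2 * j - 1) * t := by
    push_cast [Nat.cast_sub (by omega : 1 ≤ 2 * j)]
    ring
  have hmod := rF_modEq l t j
  rw [hcast] at hmod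
  have hodd : rF l t j % 2 = 1 := by
    rw [hmod.of_mul_right l, ← Int.odd_iff]
    exact Odd.mul ⟨j - 1, by ring⟩ (by exact_mod_cast ht)
  have habs : |rF l t j| = 2 * k - 1 := by
    unfold rpF at h
    rcases abs_cases (rF l t j) with ⟨h1, -⟩ | ⟨h1, -⟩ <;> rw [h1] at h ⊢ <;> omega
  rcases (abs_eq (habs ▸ abs_nonneg _)).1 habs with hr | hr
  · exact .of_modEq (hmod.symm.trans (hr ▸ rfl))
  · exact .of_modEq_neg (hmod.symm.trans (hr ▸ rfl))

section Blocks

variable {m p l b k x : ℤ}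

theorem eq_of_modEqUpToSign_of_odd_block (hl : l = 2 * (2 * m + 1) * p + 1)
    (h : ModEqUpToSign (2 * l) x ((2 * m + 1) * (2 * k - 1))) (hx₀ : 0 < x) (hx : x < l)
    (hb₀ : 0 ≤ b) (hbm : b ≤ m) (hk₁ : 2 * b * p + 1 ≤ k) (hk₂ : k ≤ (2 * b + 1) * p) :
    x = (2 * m + 1) * (2 * k - 1) - 2 * b * l := by
  have hq : 0 ≤ 2 * m + 1 := by linarith
  refine (h.trans (.of_modEq (Int.modEq_iff_dvd.2 ⟨-b, by ring⟩))).eq_of_pos_of_lt hx₀ hx ?_ ?_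
  · nlinarith [mul_le_mul_of_nonneg_left hk₁ hq]
  · nlinarith [mul_le_mul_of_nonneg_left hk₂ hq]

theorem eq_of_modEqUpToSign_of_even_block (hl : l = 2 * (2 * m + 1) * p + 1)
    (h : ModEqUpToSign (2 * l) x ((2 * m + 1) * (2 * k - 1))) (hx₀ : 0 < x) (hx : x < l)
    (hb₀ : 0 ≤ b) (hbm : b + 1 ≤ m) (hk₁ : (2 * b + 1) * p + 1 ≤ k)
    (hk₂ : k ≤ (2 * b + 2) * p) :
    x = (2 * b + 2) * l - (2 * m + 1) * (2 * k - 1) := by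
  have hq : 0 ≤ 2 * m + 1 := by linarith
  refine (h.trans (.of_modEq_neg (Int.modEq_iff_dvd.2 ⟨-(b + 1), by ring⟩))).eq_of_pos_of_lt
    hx₀ hx ?_ ?_
  · nlinarith [mul_le_mul_of_nonneg_left hk₂ hq]
  · nlinarith [mul_le_mul_of_nonneg_left hk₁ hq]

end Blocks

theorem stmt7_general (m p l t p' : ℕ)
    (hl : l = 4*m*p + 2*p + 1) (ht : t = 4*m*p + 1) (hp' : p' = (2*m+1)*p)
    (a k : ℕ) (ha1 : 1 ≤ a) (ha2 : a ≤ 2*m+1)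
    (hk1 : (a-1)*p + 1 ≤ k) (hk2 : k ≤ a*p)
    (j : ℕ) (hj1 : 1 ≤ j) (hj2 : j ≤ p') (hrj : rpF l t j = (k : ℤ)) :
    (j : ℤ) =
      if a % 2 = 1 then
        (2*(m:ℤ)+1) * ((k:ℤ) - 1) + (m:ℤ) + 1 - (((a:ℤ) - 1)/2) * (2*(2*(m:ℤ)+1)*(p:ℤ) + 1)
      else
        (2*(m:ℤ)+1) * (2*(p:ℤ) - (k:ℤ)) + (m:ℤ) + 2 + (((a:ℤ) - 2)/2) * (2*(2*(m:ℤ)+1)*(p:ℤ) + 1) := by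
  have hlZ : (l : ℤ) = 2 * (2 * m + 1) * p + 1 := by subst hl; push_cast; ring
  have htZ : (t : ℤ) = 4 * m * p + 1 := by subst ht; push_cast; ring
  have ht_odd : Odd t := ⟨2 * m * p, by rw [ht]; ring⟩
  -- `(2m+1) t = 2m l + 1`
  have hx : ModEqUpToSign (2 * l) (2 * j - 1) ((2 * m + 1) * (2 * k - 1)) :=
    (ModEqUpToSign.of_modEq (Int.modEq_iff_dvd.2 ⟨m * (2 * j - 1), by rw [htZ, hlZ]; ring⟩)).trans
      ((modEqUpToSign_of_rpF_eq ht_odd hj1 hrj).mul_left _)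
  have hjp : (j : ℤ) ≤ (2 * m + 1) * p := by exact_mod_cast hp' ▸ hj2
  have hx₀ : 0 < 2 * (j : ℤ) - 1 := by omega
  have hxl : 2 * (j : ℤ) - 1 < l := by linarith
  split_ifs with ha
  · obtain ⟨b, rfl⟩ : ∃ b, a = 2 * b + 1 := ⟨a / 2, by omega⟩
    have hk₁ : 2 * (b : ℤ) * p + 1 ≤ k := by
      rw [Nat.add_sub_cancel] at hk1; exact_mod_cast hk1
    have hk₂ : (k : ℤ) ≤ (2 * b + 1) * p := by exact_mod_cast hk2
    have := eq_of_modEqUpToSign_of_odd_block hlZ hx hx₀ hxl (by positivity) (by omega) hk₁ hk₂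
    rw [show (((2 * b + 1 : ℕ) : ℤ) - 1) / 2 = b by omega]
    rw [hlZ] at this
    linarith
  · obtain ⟨b, rfl⟩ : ∃ b, a = 2 * b + 2 := ⟨a / 2 - 1, by omega⟩
    have hk₁ : (2 * (b : ℤ) + 1) * p + 1 ≤ k := by
      rw [show 2 * b + 2 - 1 = 2 * b + 1 by omega] at hk1; exact_mod_cast hk1
    have hk₂ : (k : ℤ) ≤ (2 * b + 2) * p := by exact_mod_cast hk2
    have := eq_of_modEqUpToSign_of_even_block hlZ hx hx₀ hxl (by positivity) (by omega) hk₁ hk₂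
    rw [show (((2 * b + 2 : ℕ) : ℤ) - 2) / 2 = b by omega]
    rw [hlZ] at this
    linarith

theorem stmt7 (m p l t p' : ℕ) (hm : 1 ≤ m) (hp : 1 ≤ p)
    (hl : l = 4*m*p + 2*p + 1) (ht : t = 4*m*p + 1) (hp' : p' = (2*m+1)*p)
    (a k : ℕ) (ha1 : 1 ≤ a) (ha2 : a ≤ 2*m+1)
    (hk1 : (a-1)*p + 1 ≤ k) (hk2 : k ≤ a*p)
    (j : ℕ) (hj1 : 1 ≤ j) (hj2 : j ≤ p') (hrj : rpF l t j = (k : ℤ)) :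
    (j : ℤ) =
      if a % 2 = 1 then
        (2*(m:ℤ)+1) * ((k:ℤ) - 1) + (m:ℤ) + 1 - (((a:ℤ) - 1)/2) * (2*(2*(m:ℤ)+1)*(p:ℤ) + 1)
      else
        (2*(m:ℤ)+1) * (2*(p:ℤ) - (k:ℤ)) + (m:ℤ) + 2 + (((a:ℤ) - 2)/2) * (2*(2*(m:ℤ)+1)*(p:ℤ) + 1) :=
  stmt7_general m p l t p' hl ht hp' a k ha1 ha2 hk1 hk2 j hj1 hj2 hrj
end

section
/- Let m and p be positive integers, l = 4mp + 2p + 1 and t = 4mp + 1, so that p' = (2m+1)p. Then for every k with 1 ≤ k ≤ p': σ_{i_k} = 1 if ⌈k/p⌉ is odd, and σ_{i_k} = −1 if ⌈k/p⌉ is even. -/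
theorem sigmaF_eq_ite_rF_nonneg (l t j : ℕ) : sigmaF l t j = if 0 ≤ rF l t j then 1 else -1 := by
  unfold sigmaF rF
  generalize (2 * j - 1) * t = N
  rcases Nat.eq_zero_or_pos l with rfl | hl
  · simp
  have hpow : ((-1) ^ (N / l) : ℤ) = (-1) ^ (N % (l * 2) / l) := by
    rw [Nat.mod_mul_right_div_self, ← Nat.div_add_mod' (N / l) 2, pow_add, pow_mul']
    norm_num
  have hmod : (N : ℤ) % (2 * l) = (N % (l * 2) : ℕ) := by push_cast; rw [mul_comm]
  have hR : N % (l * 2) < l * 2 := Nat.mod_lt _ (by omega)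
  rw [hpow, hmod]
  by_cases h : N % (l * 2) < l
  · have h' : ((N % (l * 2) : ℕ) : ℤ) < l := by exact_mod_cast h
    rw [Nat.div_eq_of_lt h, if_pos h', if_pos (by positivity), pow_zero]
  · have h' : ¬((N % (l * 2) : ℕ) : ℤ) < l := by exact_mod_cast h
    rw [Nat.div_eq_of_lt_le (k := 1) (by omega) (by omega), if_neg h', if_neg (by omega), pow_one]

theorem rF_eq_of_modEq {l t j : ℕ} {r : ℤ} (hlr : -l < r) (hrl : r < l)
    (h : (((2 * j - 1) * t : ℕ) : ℤ) ≡ r [ZMOD 2 * l]) : rF l t j = r := by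
  unfold rF
  rw [h]
  rcases le_or_gt 0 r with hr | hr
  · rw [Int.emod_eq_of_lt hr (by omega), if_pos hrl]
  · rw [← Int.add_emod_right, Int.emod_eq_of_lt (by omega) (by omega), if_neg (by omega)]
    ring

theorem rF_block_eq (m p c s : ℕ) (hc : c < p) (hs : s ≤ 2 * m) :
    rF (4 * m * p + 2 * p + 1) (4 * m * p + 1) ((2 * m + 1) * c + s + 1)
      = (4 * m * p + 2 * p + 1 : ℤ) + 2 * c - 2 * p * (2 * s + 1) := by
  have hc' : (c : ℤ) + 1 ≤ p := by exact_mod_cast hc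
  have hs' : (s : ℤ) ≤ 2 * m := by exact_mod_cast hs
  apply rF_eq_of_modEq
  · push_cast; nlinarith
  · push_cast; nlinarith
  · rw [show 2 * ((2 * m + 1) * c + s + 1) - 1 = 2 * ((2 * m + 1) * c + s) + 1 by omega,
      Int.modEq_iff_dvd]
    push_cast
    exact ⟨-(2 * m * c + s), by ring⟩

theorem add_pred_div_eq {k p q : ℕ} (h1 : q * p < k) (h2 : k ≤ q * p + p) :
    (k + p - 1) / p = q + 1 := by
  apply Nat.div_eq_of_lt_le <;> simp only [add_one_mul] <;> omega

theorem exists_eq_mul_add_add_one {n p j : ℕ} (hn : 0 < n) (hj1 : 1 ≤ j) (hj2 : j ≤ n * p) :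
    ∃ c s, j = n * c + s + 1 ∧ c < p ∧ s < n := by
  refine ⟨(j - 1) / n, (j - 1) % n, ?_, ?_, Nat.mod_lt _ hn⟩
  · have := Nat.div_add_mod (j - 1) n
    omega
  · rw [Nat.div_lt_iff_lt_mul hn, mul_comm]
    omega

theorem stmt8_general (m p l t p' : ℕ)
    (hl : l = 4*m*p + 2*p + 1) (ht : t = 4*m*p + 1) (hp' : p' = (2*m+1)*p)
    (k : ℕ) (j : ℕ) (hj1 : 1 ≤ j) (hj2 : j ≤ p') (hrj : rpF l t j = (k : ℤ)) :
    sigmaF l t j = if ((k + p - 1) / p) % 2 = 1 then 1 else -1 := by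
  subst hl ht hp'
  obtain ⟨c, s, rfl, hc, hs⟩ := exists_eq_mul_add_add_one (by omega) hj1 hj2
  have hr := rF_block_eq m p c s hc (by omega)
  rw [sigmaF_eq_ite_rF_nonneg, hr]
  rw [rpF, hr] at hrj
  rcases le_or_gt s m with hsm | hsm
  · obtain ⟨q, rfl⟩ := Nat.exists_eq_add_of_le hsm
    -- products are brought to the shape `q * p`, which `omega` then treats as a single atom
    have hR : (4 * ((s + q : ℕ) : ℤ) * p + 2 * p + 1) + 2 * c - 2 * p * (2 * s + 1)
        = 2 * (2 * (q * p) + c) + 1 := by push_cast; ring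
    rw [hR, abs_of_nonneg (by positivity)] at hrj
    have hmul : 2 * q * p = 2 * (q * p) := by ring
    rw [hR, if_pos (by positivity), add_pred_div_eq (q := 2 * q) (by omega) (by omega),
      if_pos (by omega)]
  · obtain ⟨q, rfl⟩ := Nat.exists_eq_add_of_lt hsm
    have hR : (4 * (m : ℤ) * p + 2 * p + 1) + 2 * c - 2 * p * (2 * ((m + q + 1 : ℕ) : ℤ) + 1)
        = 2 * c + 1 - 2 * (2 * (q * p) + 2 * p) := by push_cast; ring
    have hqp : (0 : ℤ) ≤ q * p := by positivity
    have hmul : (2 * q + 1) * p = 2 * (q * p) + p := by ring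
    rw [hR, abs_of_neg (by omega)] at hrj
    rw [hR, if_neg (by omega), add_pred_div_eq (q := 2 * q + 1) (by omega) (by omega),
      if_neg (by omega)]

theorem stmt8 (m p l t p' : ℕ) (hm : 1 ≤ m) (hp : 1 ≤ p)
    (hl : l = 4*m*p + 2*p + 1) (ht : t = 4*m*p + 1) (hp' : p' = (2*m+1)*p)
    (k : ℕ) (hk1 : 1 ≤ k) (hk2 : k ≤ p')
    (j : ℕ) (hj1 : 1 ≤ j) (hj2 : j ≤ p') (hrj : rpF l t j = (k : ℤ)) :
    sigmaF l t j = if ((k + p - 1) / p) % 2 = 1 then 1 else -1 :=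
  stmt8_general m p l t p' hl ht hp' k j hj1 hj2 hrj
end

section
/- Let m and p be positive integers, l = 4mp + 2p + 1 and t = 4mp + 1, so that p' = (2m+1)p. Then: (i) for 1 ≤ k ≤ p', σ_{i_k} + σ_{i_{p'+1−k}} = 2 if ip + 1 ≤ k ≤ (i+1)p for some i ∈ {0, 2, …, 2m}, and σ_{i_k} + σ_{i_{p'+1−k}} = −2 if ip + 1 ≤ k ≤ (i+1)p for some i ∈ {1, 3, …, 2m−1}. (ii) For 1 ≤ j ≤ p' − 1, σ_{j+1} + σ_{p'+1−j} = 2 if j ≡ 0 (mod 2m+1), and σ_{j+1} + σ_{p'+1−j} = 0 otherwise. -/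
/-!
Since `(2m+1)t = 1 + 2m·l`, writing `2(j-1) = (2m+1)a + b` with `b ≤ 2m` gives the division
`(2j-1)t = l(2ma + b) + (2p(2m-b) + a + 1)` with remainder in `[0, l)`. As `a ≡ b (mod 2)`,
this yields `σ_j = (-1)^a`, and `r'(j)` lies in the block `[ip+1, (i+1)p]` with `i = 2m-b`
(`b` even) or `i = b` (`b` odd), so `σ_j = (-1)^⌊(r'(j)-1)/p⌋`. Part (i) follows because `k` and
`p'+1-k` lie in the blocks `i` and `2m-i`; part (ii) because `⌊2j/n⌋` and `⌊(2np-2j)/n⌋`,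
`n = 2m+1`, have the same parity exactly when `n ∣ 2j`.
-/

section Remainder

variable {l t j R E : ℕ}

lemma sigmaF_eq_of_mul_eq (heq : (2*j - 1)*t = R + l*E) (hR : R < l) :
    sigmaF l t j = (-1) ^ E := by
  rw [sigmaF, heq, Nat.add_mul_div_left _ _ (by omega), Nat.div_eq_of_lt hR, zero_add]

lemma rF_eq_of_mul_eq (heq : (2*j - 1)*t = R + l*E) (hR : R < l) :
    rF l t j = if E % 2 = 0 then (R : ℤ) else R - l := by
  have hsplit : R + l*E = (R + l*(E % 2)) + 2*l*(E / 2) := by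
    nth_rw 1 [← Nat.mod_add_div E 2]; ring
  have hmod : (2*j - 1)*t % (2*l) = R + l*(E % 2) := by
    rw [heq, hsplit, Nat.add_mul_mod_self_left, Nat.mod_eq_of_lt]
    rcases Nat.mod_two_eq_zero_or_one E with h | h <;> simp only [h] <;> omega
  unfold rF
  rw [show (((2*j - 1)*t : ℕ) : ℤ) % (2*l) = ((R + l*(E % 2) : ℕ) : ℤ) by exact_mod_cast hmod]
  rcases Nat.mod_two_eq_zero_or_one E with h | h <;> simp only [h] <;> push_cast <;> split_ifs <;>
    omega

lemma rpF_eq_of_mul_eq_of_even (heq : (2*j - 1)*t = R + l*E) (hR : R < l) (hE : E % 2 = 0) :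
    rpF l t j = ((R : ℤ) + 1) / 2 := by
  rw [rpF, rF_eq_of_mul_eq heq hR, if_pos hE, abs_of_nonneg (by positivity)]

lemma rpF_eq_of_mul_eq_of_odd (heq : (2*j - 1)*t = R + l*E) (hR : R < l) (hE : E % 2 = 1) :
    rpF l t j = ((l : ℤ) - R + 1) / 2 := by
  rw [rpF, rF_eq_of_mul_eq heq hR, if_neg (by omega), abs_of_neg (by omega)]
  ring_nf

end Remainder

section Blocks

variable {m p l t j a b c k : ℕ}

lemma two_mul_sub_one_mul_eq (hl : l = 4*m*p + 2*p + 1) (ht : t = 4*m*p + 1) (hj : 1 ≤ j)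
    (hab : 2*(j - 1) = (2*m + 1)*a + b) (hbc : b + c = 2*m) :
    (2*j - 1)*t = (2*(p*c) + a + 1) + l*(2*m*a + b) := by
  rw [show 2*j - 1 = (2*m + 1)*a + b + 1 by omega, hl, ht]
  zify at hbc ⊢
  linear_combination (-2*(p : ℤ)) * hbc

lemma remainder_lt (hl : l = 4*m*p + 2*p + 1) (ha : a < 2*p) (hbc : b + c = 2*m) :
    2*(p*c) + a + 1 < l := by
  have : 2*(p*c) ≤ 4*m*p := by nlinarith
  omega

lemma sigmaF_eq_neg_one_pow_of_two_mul_sub_one_eq (hl : l = 4*m*p + 2*p + 1)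
    (ht : t = 4*m*p + 1) (hj : 1 ≤ j) (hab : 2*(j - 1) = (2*m + 1)*a + b) (ha : a < 2*p)
    (hbc : b + c = 2*m) :
    sigmaF l t j = (-1) ^ a := by
  rw [sigmaF_eq_of_mul_eq (two_mul_sub_one_mul_eq hl ht hj hab hbc) (remainder_lt hl ha hbc)]
  have h1 : (2*m + 1)*a = 2*(m*a) + a := by ring
  have h2 : 2*m*a = 2*(m*a) := by ring
  exact neg_one_pow_congr (by simp only [Nat.even_iff]; omega)

lemma neg_one_pow_rpF_sub_one_div (hl : l = 4*m*p + 2*p + 1) (ht : t = 4*m*p + 1) (hp : 0 < p)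
    (hj : 1 ≤ j) (hab : 2*(j - 1) = (2*m + 1)*a + b) (ha : a < 2*p) (hbc : b + c = 2*m)
    (hk : rpF l t j = k) :
    (-1 : ℤ) ^ ((k - 1)/p) = (-1) ^ a := by
  have heq := two_mul_sub_one_mul_eq hl ht hj hab hbc
  have hR := remainder_lt hl ha hbc
  have hpar : a % 2 = b % 2 := by
    have : (2*m + 1)*a = 2*(m*a) + a := by ring
    omega
  have hE : (2*m*a + b) % 2 = b % 2 := by
    have : 2*m*a = 2*(m*a) := by ring
    omega
  rcases Nat.mod_two_eq_zero_or_one b with hb | hb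
  · rw [rpF_eq_of_mul_eq_of_even heq hR (by omega)] at hk
    have hdiv : (k - 1)/p = c := by
      rw [show k - 1 = p*c + a/2 by push_cast at hk; omega, Nat.mul_add_div hp,
        Nat.div_eq_of_lt (by omega), add_zero]
    exact hdiv ▸ neg_one_pow_congr (by simp only [Nat.even_iff]; omega)
  · rw [rpF_eq_of_mul_eq_of_odd heq hR (by omega)] at hk
    have hl' : l = 2*(p*b) + 2*(p*c) + 2*p + 1 := by
      rw [hl, show 4*m*p = 2*p*(2*m) by ring, ← hbc]; ring
    have hdiv : (k - 1)/p = b := by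
      rw [show k - 1 = p*b + (p - (a + 1)/2) by push_cast at hk; omega, Nat.mul_add_div hp,
        Nat.div_eq_of_lt (by omega), add_zero]
    exact hdiv ▸ neg_one_pow_congr (by simp only [Nat.even_iff]; omega)

lemma mod_add_sub_mod_eq (m x : ℕ) : x % (2*m + 1) + (2*m - x % (2*m + 1)) = 2*m := by
  have := Nat.mod_lt x (by omega : 0 < 2*m + 1)
  omega

lemma two_mul_sub_one_div_lt (hj : 1 ≤ j) (hjp : j ≤ (2*m + 1)*p) :
    2*(j - 1)/(2*m + 1) < 2*p := by
  rw [Nat.div_lt_iff_lt_mul (by omega), show 2*p*(2*m + 1) = 2*((2*m + 1)*p) by ring]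
  omega

lemma sigmaF_eq_neg_one_pow_two_mul_sub_one_div (hl : l = 4*m*p + 2*p + 1)
    (ht : t = 4*m*p + 1) (hj : 1 ≤ j) (hjp : j ≤ (2*m + 1)*p) :
    sigmaF l t j = (-1) ^ (2*(j - 1)/(2*m + 1)) :=
  sigmaF_eq_neg_one_pow_of_two_mul_sub_one_eq hl ht hj (Nat.div_add_mod _ _).symm
    (two_mul_sub_one_div_lt hj hjp) (mod_add_sub_mod_eq m _)

lemma sigmaF_eq_of_rpF_eq (hl : l = 4*m*p + 2*p + 1) (ht : t = 4*m*p + 1) (hp : 0 < p)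
    (hj : 1 ≤ j) (hjp : j ≤ (2*m + 1)*p) (hk : rpF l t j = k) :
    sigmaF l t j = (-1) ^ ((k - 1)/p) := by
  have hab := (Nat.div_add_mod (2*(j - 1)) (2*m + 1)).symm
  have ha := two_mul_sub_one_div_lt hj hjp
  rw [sigmaF_eq_neg_one_pow_of_two_mul_sub_one_eq hl ht hj hab ha (mod_add_sub_mod_eq m _),
    neg_one_pow_rpF_sub_one_div hl ht hp hj hab ha (mod_add_sub_mod_eq m _) hk]

end Blocks

lemma sub_one_div_eq_of_mem_block {p i k : ℕ} (hlo : i*p + 1 ≤ k) (hhi : k ≤ (i + 1)*p) :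
    (k - 1)/p = i :=
  Nat.div_eq_of_lt_le (by omega) (by omega)

lemma mul_sub_div_eq_of_mem_block {N p i k : ℕ} (hi : i < N) (hlo : i*p + 1 ≤ k)
    (hhi : k ≤ (i + 1)*p) :
    (N*p - k)/p = N - 1 - i := by
  obtain ⟨d, rfl⟩ : ∃ d, N = i + 1 + d := ⟨N - i - 1, by omega⟩
  have h1 : (i + 1 + d)*p = (i + 1)*p + d*p := by ring
  have h2 : (d + 1)*p = d*p + p := by ring
  have h3 : (i + 1)*p = i*p + p := by ring
  rw [show i + 1 + d - 1 - i = d by omega]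
  exact Nat.div_eq_of_lt_le (by omega) (by omega)

lemma neg_one_pow_add_neg_one_pow_sub {N i : ℕ} (hN : Even N) (hi : i ≤ N) :
    (-1 : ℤ) ^ i + (-1) ^ (N - i) = 2 * (-1) ^ i := by
  rw [neg_one_pow_congr (m := N - i) (n := i) (by simp only [Nat.even_iff] at hN ⊢; omega)]
  ring

lemma neg_one_pow_div_add_neg_one_pow_sub_div {n N x : ℕ} (hn : 0 < n) (hN : Even N)
    (hx : x ≤ n*N) :
    (-1 : ℤ) ^ (x/n) + (-1) ^ ((n*N - x)/n) = if n ∣ x then 2 * (-1) ^ (x/n) else 0 := by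
  split_ifs with hdvd
  · obtain ⟨c, rfl⟩ := hdvd
    have hc : c ≤ N := Nat.le_of_mul_le_mul_left hx hn
    rw [← Nat.mul_sub, Nat.mul_div_cancel_left _ hn, Nat.mul_div_cancel_left _ hn,
      neg_one_pow_add_neg_one_pow_sub hN hc]
  · obtain ⟨c, r, rfl, hr, hrn⟩ : ∃ c r, x = n*c + r ∧ 0 < r ∧ r < n :=
      ⟨x / n, x % n, (Nat.div_add_mod x n).symm,
        Nat.pos_of_ne_zero (mt Nat.dvd_of_mod_eq_zero hdvd), Nat.mod_lt x hn⟩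
    have hc : c < N := by
      by_contra h
      have : n*N ≤ n*c := Nat.mul_le_mul_left n (not_lt.mp h)
      omega
    obtain ⟨d, rfl⟩ : ∃ d, N = c + 1 + d := ⟨N - c - 1, by omega⟩
    have : n*(c + 1 + d) = n*c + n + n*d := by ring
    rw [show n*(c + 1 + d) - (n*c + r) = n*d + (n - r) by omega, Nat.mul_add_div hn,
      Nat.mul_add_div hn, Nat.div_eq_of_lt hrn, Nat.div_eq_of_lt (by omega), add_zero, add_zero,
      neg_one_pow_congr (m := d) (n := c + 1) (by simp only [Nat.even_iff] at hN ⊢; omega),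
      pow_succ]
    ring

lemma neg_one_pow_two_mul_div_add_neg_one_pow_sub_div {n p j : ℕ} (hn : Odd n)
    (hj : j ≤ n*p) :
    (-1 : ℤ) ^ (2*j/n) + (-1) ^ ((n*(2*p) - 2*j)/n) = if n ∣ j then 2 else 0 := by
  rw [neg_one_pow_div_add_neg_one_pow_sub_div hn.pos (even_two_mul p)
    (by rw [mul_left_comm]; omega)]
  by_cases h : n ∣ j
  · obtain ⟨c, rfl⟩ := h
    rw [if_pos ((dvd_mul_right n c).mul_left 2), if_pos (dvd_mul_right n c), mul_left_comm,
      Nat.mul_div_cancel_left _ hn.pos, (even_two_mul c).neg_one_pow, mul_one]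
  · rw [if_neg (fun h' => h (hn.coprime_two_right.dvd_of_dvd_mul_left h')), if_neg h]

theorem stmt9_general (m p l t p' : ℕ) (hp : 1 ≤ p)
    (hl : l = 4*m*p + 2*p + 1) (ht : t = 4*m*p + 1) (hp' : p' = (2*m+1)*p)
    (I : ℕ → ℕ)
    (hI : ∀ k : ℕ, 1 ≤ k → k ≤ p' → 1 ≤ I k ∧ I k ≤ p' ∧ rpF l t (I k) = (k : ℤ)) :
    (∀ k i : ℕ, 1 ≤ k → k ≤ p' → i % 2 = 0 → i ≤ 2*m →
        i*p + 1 ≤ k → k ≤ (i+1)*p →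
        sigmaF l t (I k) + sigmaF l t (I (p' + 1 - k)) = 2) ∧
    (∀ k i : ℕ, 1 ≤ k → k ≤ p' → i % 2 = 1 → i ≤ 2*m - 1 →
        i*p + 1 ≤ k → k ≤ (i+1)*p →
        sigmaF l t (I k) + sigmaF l t (I (p' + 1 - k)) = -2) ∧
    (∀ j : ℕ, 1 ≤ j → j ≤ p' - 1 →
        sigmaF l t (j+1) + sigmaF l t (p' + 1 - j) =
          if (2*m+1) ∣ j then 2 else 0) := by
  subst hp'
  have hσI (k : ℕ) (hk1 : 1 ≤ k) (hk2 : k ≤ (2*m + 1)*p) :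
      sigmaF l t (I k) = (-1) ^ ((k - 1)/p) :=
    have ⟨hIk1, hIk2, hrpF⟩ := hI k hk1 hk2
    sigmaF_eq_of_rpF_eq hl ht hp hIk1 hIk2 hrpF
  have hblock (k i : ℕ) (hi : i ≤ 2*m) (hlo : i*p + 1 ≤ k) (hhi : k ≤ (i + 1)*p) :
      sigmaF l t (I k) + sigmaF l t (I ((2*m + 1)*p + 1 - k)) = 2 * (-1) ^ i := by
    have hk : k ≤ (2*m + 1)*p := hhi.trans (Nat.mul_le_mul_right p (by omega))
    rw [hσI k (by omega) hk, hσI _ (by omega) (by omega), sub_one_div_eq_of_mem_block hlo hhi,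
      show (2*m + 1)*p + 1 - k - 1 = (2*m + 1)*p - k by omega,
      mul_sub_div_eq_of_mem_block (by omega) hlo hhi, show 2*m + 1 - 1 - i = 2*m - i by omega,
      neg_one_pow_add_neg_one_pow_sub (even_two_mul m) hi]
  refine ⟨fun k i _ _ hi him hlo hhi => ?_, fun k i _ _ hi him hlo hhi => ?_, fun j hj1 hj2 => ?_⟩
  · rw [hblock k i him hlo hhi, (Nat.even_iff.mpr hi).neg_one_pow, mul_one]
  · rw [hblock k i (by omega) hlo hhi, (Nat.odd_iff.mpr hi).neg_one_pow]
    norm_num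
  · rw [sigmaF_eq_neg_one_pow_two_mul_sub_one_div hl ht (by omega) (by omega),
      sigmaF_eq_neg_one_pow_two_mul_sub_one_div hl ht (by omega) (by omega),
      show 2*(j + 1 - 1) = 2*j by omega,
      show 2*((2*m + 1)*p + 1 - j - 1) = (2*m + 1)*(2*p) - 2*j by rw [mul_left_comm]; omega]
    exact neg_one_pow_two_mul_div_add_neg_one_pow_sub_div (odd_two_mul_add_one m) (by omega)

theorem stmt9 (m p l t p' : ℕ) (hm : 1 ≤ m) (hp : 1 ≤ p)
    (hl : l = 4*m*p + 2*p + 1) (ht : t = 4*m*p + 1) (hp' : p' = (2*m+1)*p)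
    (I : ℕ → ℕ)
    (hI : ∀ k : ℕ, 1 ≤ k → k ≤ p' → 1 ≤ I k ∧ I k ≤ p' ∧ rpF l t (I k) = (k : ℤ)) :
    (∀ k i : ℕ, 1 ≤ k → k ≤ p' → i % 2 = 0 → i ≤ 2*m →
        i*p + 1 ≤ k → k ≤ (i+1)*p →
        sigmaF l t (I k) + sigmaF l t (I (p' + 1 - k)) = 2) ∧
    (∀ k i : ℕ, 1 ≤ k → k ≤ p' → i % 2 = 1 → i ≤ 2*m - 1 →
        i*p + 1 ≤ k → k ≤ (i+1)*p →
        sigmaF l t (I k) + sigmaF l t (I (p' + 1 - k)) = -2) ∧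
    (∀ j : ℕ, 1 ≤ j → j ≤ p' - 1 →
        sigmaF l t (j+1) + sigmaF l t (p' + 1 - j) =
          if (2*m+1) ∣ j then 2 else 0) :=
  stmt9_general m p l t p' hp hl ht hp' I hI
end
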